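/- Let ρ : g → so_ε(V,( , )) be a finite-dimensional special ε-orthogonal representation of a finite-dimensional ε-quadratic colour Lie algebra (g,B_g) with moment map μ and quadrilinear covariant Q. Then Q = −2 N_{B_g}(μ) = −4 β(R_μ), where N_{B_g}(μ) := μ ∧_{B_g} μ. -/
import Mathlib


/-- A commutation factor of an abelian group `Γ` with values in `k`. -/
structure CommutationFactor (k Γ : Type*) [Field k] [AddCommGroup Γ] where
  ε : Γ → Γ → k
  mul_symm : ∀ a b, ε a b * ε b a = 1
  add_fst : ∀ a b c, ε (a + b) c = ε a c * ε b c
  add_snd : ∀ a b c, ε a (b + c) = ε a b * ε a c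

/-- The multiplier `p(σ; v₁,…,v_n)` of a permutation with respect to degrees
`a : Fin n → Γ`. -/
def pMult {k Γ : Type*} [Field k] [AddCommGroup Γ] (ε : Γ → Γ → k) {n : ℕ}
    (σ : Equiv.Perm (Fin n)) (a : Fin n → Γ) : k :=
  ((Equiv.Perm.sign σ : ℤ) : k) *
    ∏ q ∈ Finset.univ.filter
      (fun q : Fin n × Fin n => q.1 < q.2 ∧ σ⁻¹ q.2 < σ⁻¹ q.1), ε (a q.1) (a q.2)

section Aux
private def mkP (f g : Fin 4 → Fin 4) (h1 : Function.LeftInverse g f := by decide)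
    (h2 : Function.RightInverse g f := by decide) : Equiv.Perm (Fin 4) := ⟨f, g, h1, h2⟩
private def c0123 : Equiv.Perm (Fin 4) := mkP ![0,1,2,3] ![0,1,2,3]
private def c0132 : Equiv.Perm (Fin 4) := mkP ![0,1,3,2] ![0,1,3,2]
private def c0213 : Equiv.Perm (Fin 4) := mkP ![0,2,1,3] ![0,2,1,3]
private def c0231 : Equiv.Perm (Fin 4) := mkP ![0,2,3,1] ![0,3,1,2]
private def c0312 : Equiv.Perm (Fin 4) := mkP ![0,3,1,2] ![0,2,3,1]
private def c0321 : Equiv.Perm (Fin 4) := mkP ![0,3,2,1] ![0,3,2,1]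
private def c1023 : Equiv.Perm (Fin 4) := mkP ![1,0,2,3] ![1,0,2,3]
private def c1032 : Equiv.Perm (Fin 4) := mkP ![1,0,3,2] ![1,0,3,2]
private def c1203 : Equiv.Perm (Fin 4) := mkP ![1,2,0,3] ![2,0,1,3]
private def c1230 : Equiv.Perm (Fin 4) := mkP ![1,2,3,0] ![3,0,1,2]
private def c1302 : Equiv.Perm (Fin 4) := mkP ![1,3,0,2] ![2,0,3,1]
private def c1320 : Equiv.Perm (Fin 4) := mkP ![1,3,2,0] ![3,0,2,1]
private def c2013 : Equiv.Perm (Fin 4) := mkP ![2,0,1,3] ![1,2,0,3]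
private def c2031 : Equiv.Perm (Fin 4) := mkP ![2,0,3,1] ![1,3,0,2]
private def c2103 : Equiv.Perm (Fin 4) := mkP ![2,1,0,3] ![2,1,0,3]
private def c2130 : Equiv.Perm (Fin 4) := mkP ![2,1,3,0] ![3,1,0,2]
private def c2301 : Equiv.Perm (Fin 4) := mkP ![2,3,0,1] ![2,3,0,1]
private def c2310 : Equiv.Perm (Fin 4) := mkP ![2,3,1,0] ![3,2,0,1]
private def c3012 : Equiv.Perm (Fin 4) := mkP ![3,0,1,2] ![1,2,3,0]
private def c3021 : Equiv.Perm (Fin 4) := mkP ![3,0,2,1] ![1,3,2,0]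
private def c3102 : Equiv.Perm (Fin 4) := mkP ![3,1,0,2] ![2,1,3,0]
private def c3120 : Equiv.Perm (Fin 4) := mkP ![3,1,2,0] ![3,1,2,0]
private def c3201 : Equiv.Perm (Fin 4) := mkP ![3,2,0,1] ![2,3,1,0]
private def c3210 : Equiv.Perm (Fin 4) := mkP ![3,2,1,0] ![3,2,1,0]
private def permList : List (Equiv.Perm (Fin 4)) := [c0123, c0132, c0213, c0231, c0312, c0321, c1023, c1032, c1203, c1230, c1302, c1320, c2013, c2031, c2103, c2130, c2301, c2310, c3012, c3021, c3102, c3120, c3201, c3210]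
private theorem univ_eq : (Finset.univ : Finset (Equiv.Perm (Fin 4))) = permList.toFinset := by decide
private theorem perm_sum {M : Type*} [AddCommMonoid M] (F : Equiv.Perm (Fin 4) → M) :
    ∑ σ : Equiv.Perm (Fin 4), F σ = F c0123 + (F c0132 + (F c0213 + (F c0231 + (F c0312 + (F c0321 + (F c1023 + (F c1032 + (F c1203 + (F c1230 + (F c1302 + (F c1320 + (F c2013 + (F c2031 + (F c2103 + (F c2130 + (F c2301 + (F c2310 + (F c3012 + (F c3021 + (F c3102 + (F c3120 + (F c3201 + (F c3210))))))))))))))))))))))) := by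
  rw [univ_eq, List.sum_toFinset _ (by decide)]
  simp only [permList, List.map_cons, List.map_nil, List.sum_cons, List.sum_nil, add_zero]
private theorem c0123_a0 : c0123 (0 : Fin 4) = 0 := rfl
private theorem c0123_a1 : c0123 (1 : Fin 4) = 1 := rfl
private theorem c0123_a2 : c0123 (2 : Fin 4) = 2 := rfl
private theorem c0123_a3 : c0123 (3 : Fin 4) = 3 := rfl
private theorem c0132_a0 : c0132 (0 : Fin 4) = 0 := rfl
private theorem c0132_a1 : c0132 (1 : Fin 4) = 1 := rfl
private theorem c0132_a2 : c0132 (2 : Fin 4) = 3 := rfl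
private theorem c0132_a3 : c0132 (3 : Fin 4) = 2 := rfl
private theorem c0213_a0 : c0213 (0 : Fin 4) = 0 := rfl
private theorem c0213_a1 : c0213 (1 : Fin 4) = 2 := rfl
private theorem c0213_a2 : c0213 (2 : Fin 4) = 1 := rfl
private theorem c0213_a3 : c0213 (3 : Fin 4) = 3 := rfl
private theorem c0231_a0 : c0231 (0 : Fin 4) = 0 := rfl
private theorem c0231_a1 : c0231 (1 : Fin 4) = 2 := rfl
private theorem c0231_a2 : c0231 (2 : Fin 4) = 3 := rfl
private theorem c0231_a3 : c0231 (3 : Fin 4) = 1 := rfl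
private theorem c0312_a0 : c0312 (0 : Fin 4) = 0 := rfl
private theorem c0312_a1 : c0312 (1 : Fin 4) = 3 := rfl
private theorem c0312_a2 : c0312 (2 : Fin 4) = 1 := rfl
private theorem c0312_a3 : c0312 (3 : Fin 4) = 2 := rfl
private theorem c0321_a0 : c0321 (0 : Fin 4) = 0 := rfl
private theorem c0321_a1 : c0321 (1 : Fin 4) = 3 := rfl
private theorem c0321_a2 : c0321 (2 : Fin 4) = 2 := rfl
private theorem c0321_a3 : c0321 (3 : Fin 4) = 1 := rfl
private theorem c1023_a0 : c1023 (0 : Fin 4) = 1 := rfl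
private theorem c1023_a1 : c1023 (1 : Fin 4) = 0 := rfl
private theorem c1023_a2 : c1023 (2 : Fin 4) = 2 := rfl
private theorem c1023_a3 : c1023 (3 : Fin 4) = 3 := rfl
private theorem c1032_a0 : c1032 (0 : Fin 4) = 1 := rfl
private theorem c1032_a1 : c1032 (1 : Fin 4) = 0 := rfl
private theorem c1032_a2 : c1032 (2 : Fin 4) = 3 := rfl
private theorem c1032_a3 : c1032 (3 : Fin 4) = 2 := rfl
private theorem c1203_a0 : c1203 (0 : Fin 4) = 1 := rfl
private theorem c1203_a1 : c1203 (1 : Fin 4) = 2 := rfl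
private theorem c1203_a2 : c1203 (2 : Fin 4) = 0 := rfl
private theorem c1203_a3 : c1203 (3 : Fin 4) = 3 := rfl
private theorem c1230_a0 : c1230 (0 : Fin 4) = 1 := rfl
private theorem c1230_a1 : c1230 (1 : Fin 4) = 2 := rfl
private theorem c1230_a2 : c1230 (2 : Fin 4) = 3 := rfl
private theorem c1230_a3 : c1230 (3 : Fin 4) = 0 := rfl
private theorem c1302_a0 : c1302 (0 : Fin 4) = 1 := rfl
private theorem c1302_a1 : c1302 (1 : Fin 4) = 3 := rfl
private theorem c1302_a2 : c1302 (2 : Fin 4) = 0 := rfl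
private theorem c1302_a3 : c1302 (3 : Fin 4) = 2 := rfl
private theorem c1320_a0 : c1320 (0 : Fin 4) = 1 := rfl
private theorem c1320_a1 : c1320 (1 : Fin 4) = 3 := rfl
private theorem c1320_a2 : c1320 (2 : Fin 4) = 2 := rfl
private theorem c1320_a3 : c1320 (3 : Fin 4) = 0 := rfl
private theorem c2013_a0 : c2013 (0 : Fin 4) = 2 := rfl
private theorem c2013_a1 : c2013 (1 : Fin 4) = 0 := rfl
private theorem c2013_a2 : c2013 (2 : Fin 4) = 1 := rfl
private theorem c2013_a3 : c2013 (3 : Fin 4) = 3 := rfl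
private theorem c2031_a0 : c2031 (0 : Fin 4) = 2 := rfl
private theorem c2031_a1 : c2031 (1 : Fin 4) = 0 := rfl
private theorem c2031_a2 : c2031 (2 : Fin 4) = 3 := rfl
private theorem c2031_a3 : c2031 (3 : Fin 4) = 1 := rfl
private theorem c2103_a0 : c2103 (0 : Fin 4) = 2 := rfl
private theorem c2103_a1 : c2103 (1 : Fin 4) = 1 := rfl
private theorem c2103_a2 : c2103 (2 : Fin 4) = 0 := rfl
private theorem c2103_a3 : c2103 (3 : Fin 4) = 3 := rfl
private theorem c2130_a0 : c2130 (0 : Fin 4) = 2 := rfl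
private theorem c2130_a1 : c2130 (1 : Fin 4) = 1 := rfl
private theorem c2130_a2 : c2130 (2 : Fin 4) = 3 := rfl
private theorem c2130_a3 : c2130 (3 : Fin 4) = 0 := rfl
private theorem c2301_a0 : c2301 (0 : Fin 4) = 2 := rfl
private theorem c2301_a1 : c2301 (1 : Fin 4) = 3 := rfl
private theorem c2301_a2 : c2301 (2 : Fin 4) = 0 := rfl
private theorem c2301_a3 : c2301 (3 : Fin 4) = 1 := rfl
private theorem c2310_a0 : c2310 (0 : Fin 4) = 2 := rfl
private theorem c2310_a1 : c2310 (1 : Fin 4) = 3 := rfl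
private theorem c2310_a2 : c2310 (2 : Fin 4) = 1 := rfl
private theorem c2310_a3 : c2310 (3 : Fin 4) = 0 := rfl
private theorem c3012_a0 : c3012 (0 : Fin 4) = 3 := rfl
private theorem c3012_a1 : c3012 (1 : Fin 4) = 0 := rfl
private theorem c3012_a2 : c3012 (2 : Fin 4) = 1 := rfl
private theorem c3012_a3 : c3012 (3 : Fin 4) = 2 := rfl
private theorem c3021_a0 : c3021 (0 : Fin 4) = 3 := rfl
private theorem c3021_a1 : c3021 (1 : Fin 4) = 0 := rfl
private theorem c3021_a2 : c3021 (2 : Fin 4) = 2 := rfl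
private theorem c3021_a3 : c3021 (3 : Fin 4) = 1 := rfl
private theorem c3102_a0 : c3102 (0 : Fin 4) = 3 := rfl
private theorem c3102_a1 : c3102 (1 : Fin 4) = 1 := rfl
private theorem c3102_a2 : c3102 (2 : Fin 4) = 0 := rfl
private theorem c3102_a3 : c3102 (3 : Fin 4) = 2 := rfl
private theorem c3120_a0 : c3120 (0 : Fin 4) = 3 := rfl
private theorem c3120_a1 : c3120 (1 : Fin 4) = 1 := rfl
private theorem c3120_a2 : c3120 (2 : Fin 4) = 2 := rfl
private theorem c3120_a3 : c3120 (3 : Fin 4) = 0 := rfl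
private theorem c3201_a0 : c3201 (0 : Fin 4) = 3 := rfl
private theorem c3201_a1 : c3201 (1 : Fin 4) = 2 := rfl
private theorem c3201_a2 : c3201 (2 : Fin 4) = 0 := rfl
private theorem c3201_a3 : c3201 (3 : Fin 4) = 1 := rfl
private theorem c3210_a0 : c3210 (0 : Fin 4) = 3 := rfl
private theorem c3210_a1 : c3210 (1 : Fin 4) = 2 := rfl
private theorem c3210_a2 : c3210 (2 : Fin 4) = 1 := rfl
private theorem c3210_a3 : c3210 (3 : Fin 4) = 0 := rfl
private theorem appLemmas : True := trivial
private theorem pM_c0123 {k Γ : Type*} [Field k] [AddCommGroup Γ] (ε : Γ → Γ → k) (a : Fin 4 → Γ) :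
    pMult ε c0123 a = (1) := by
  simp (config := { decide := true }) [pMult, Finset.prod_filter, Fintype.prod_prod_type,
    Fin.prod_univ_four, show Equiv.Perm.sign c0123 = 1 by decide]
  try ring
  try exact Or.inl trivial
private theorem pM_c0132 {k Γ : Type*} [Field k] [AddCommGroup Γ] (ε : Γ → Γ → k) (a : Fin 4 → Γ) :
    pMult ε c0132 a = -(ε (a 2) (a 3)) := by
  simp (config := { decide := true }) [pMult, Finset.prod_filter, Fintype.prod_prod_type,
    Fin.prod_univ_four, show Equiv.Perm.sign c0132 = -1 by decide]
  try ring
  try exact Or.inl trivial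
private theorem pM_c0213 {k Γ : Type*} [Field k] [AddCommGroup Γ] (ε : Γ → Γ → k) (a : Fin 4 → Γ) :
    pMult ε c0213 a = -(ε (a 1) (a 2)) := by
  simp (config := { decide := true }) [pMult, Finset.prod_filter, Fintype.prod_prod_type,
    Fin.prod_univ_four, show Equiv.Perm.sign c0213 = -1 by decide]
  try ring
  try exact Or.inl trivial
private theorem pM_c0231 {k Γ : Type*} [Field k] [AddCommGroup Γ] (ε : Γ → Γ → k) (a : Fin 4 → Γ) :
    pMult ε c0231 a = (ε (a 1) (a 2) * ε (a 1) (a 3)) := by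
  simp (config := { decide := true }) [pMult, Finset.prod_filter, Fintype.prod_prod_type,
    Fin.prod_univ_four, show Equiv.Perm.sign c0231 = 1 by decide]
  try ring
  try exact Or.inl trivial
private theorem pM_c0312 {k Γ : Type*} [Field k] [AddCommGroup Γ] (ε : Γ → Γ → k) (a : Fin 4 → Γ) :
    pMult ε c0312 a = (ε (a 1) (a 3) * ε (a 2) (a 3)) := by
  simp (config := { decide := true }) [pMult, Finset.prod_filter, Fintype.prod_prod_type,
    Fin.prod_univ_four, show Equiv.Perm.sign c0312 = 1 by decide]
  try ring
  try exact Or.inl trivial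
private theorem pM_c0321 {k Γ : Type*} [Field k] [AddCommGroup Γ] (ε : Γ → Γ → k) (a : Fin 4 → Γ) :
    pMult ε c0321 a = -(ε (a 1) (a 2) * ε (a 1) (a 3) * ε (a 2) (a 3)) := by
  simp (config := { decide := true }) [pMult, Finset.prod_filter, Fintype.prod_prod_type,
    Fin.prod_univ_four, show Equiv.Perm.sign c0321 = -1 by decide]
  try ring
  try exact Or.inl trivial
private theorem pM_c1023 {k Γ : Type*} [Field k] [AddCommGroup Γ] (ε : Γ → Γ → k) (a : Fin 4 → Γ) :
    pMult ε c1023 a = -(ε (a 0) (a 1)) := by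
  simp (config := { decide := true }) [pMult, Finset.prod_filter, Fintype.prod_prod_type,
    Fin.prod_univ_four, show Equiv.Perm.sign c1023 = -1 by decide]
  try ring
  try exact Or.inl trivial
private theorem pM_c1032 {k Γ : Type*} [Field k] [AddCommGroup Γ] (ε : Γ → Γ → k) (a : Fin 4 → Γ) :
    pMult ε c1032 a = (ε (a 0) (a 1) * ε (a 2) (a 3)) := by
  simp (config := { decide := true }) [pMult, Finset.prod_filter, Fintype.prod_prod_type,
    Fin.prod_univ_four, show Equiv.Perm.sign c1032 = 1 by decide]
  try ring
  try exact Or.inl trivial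
private theorem pM_c1203 {k Γ : Type*} [Field k] [AddCommGroup Γ] (ε : Γ → Γ → k) (a : Fin 4 → Γ) :
    pMult ε c1203 a = (ε (a 0) (a 1) * ε (a 0) (a 2)) := by
  simp (config := { decide := true }) [pMult, Finset.prod_filter, Fintype.prod_prod_type,
    Fin.prod_univ_four, show Equiv.Perm.sign c1203 = 1 by decide]
  try ring
  try exact Or.inl trivial
private theorem pM_c1230 {k Γ : Type*} [Field k] [AddCommGroup Γ] (ε : Γ → Γ → k) (a : Fin 4 → Γ) :
    pMult ε c1230 a = -(ε (a 0) (a 1) * ε (a 0) (a 2) * ε (a 0) (a 3)) := by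
  simp (config := { decide := true }) [pMult, Finset.prod_filter, Fintype.prod_prod_type,
    Fin.prod_univ_four, show Equiv.Perm.sign c1230 = -1 by decide]
  try ring
  try exact Or.inl trivial
private theorem pM_c1302 {k Γ : Type*} [Field k] [AddCommGroup Γ] (ε : Γ → Γ → k) (a : Fin 4 → Γ) :
    pMult ε c1302 a = -(ε (a 0) (a 1) * ε (a 0) (a 3) * ε (a 2) (a 3)) := by
  simp (config := { decide := true }) [pMult, Finset.prod_filter, Fintype.prod_prod_type,
    Fin.prod_univ_four, show Equiv.Perm.sign c1302 = -1 by decide]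
  try ring
  try exact Or.inl trivial
private theorem pM_c1320 {k Γ : Type*} [Field k] [AddCommGroup Γ] (ε : Γ → Γ → k) (a : Fin 4 → Γ) :
    pMult ε c1320 a = (ε (a 0) (a 1) * ε (a 0) (a 2) * ε (a 0) (a 3) * ε (a 2) (a 3)) := by
  simp (config := { decide := true }) [pMult, Finset.prod_filter, Fintype.prod_prod_type,
    Fin.prod_univ_four, show Equiv.Perm.sign c1320 = 1 by decide]
  try ring
  try exact Or.inl trivial
private theorem pM_c2013 {k Γ : Type*} [Field k] [AddCommGroup Γ] (ε : Γ → Γ → k) (a : Fin 4 → Γ) :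
    pMult ε c2013 a = (ε (a 0) (a 2) * ε (a 1) (a 2)) := by
  simp (config := { decide := true }) [pMult, Finset.prod_filter, Fintype.prod_prod_type,
    Fin.prod_univ_four, show Equiv.Perm.sign c2013 = 1 by decide]
  try ring
  try exact Or.inl trivial
private theorem pM_c2031 {k Γ : Type*} [Field k] [AddCommGroup Γ] (ε : Γ → Γ → k) (a : Fin 4 → Γ) :
    pMult ε c2031 a = -(ε (a 0) (a 2) * ε (a 1) (a 2) * ε (a 1) (a 3)) := by
  simp (config := { decide := true }) [pMult, Finset.prod_filter, Fintype.prod_prod_type,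
    Fin.prod_univ_four, show Equiv.Perm.sign c2031 = -1 by decide]
  try ring
  try exact Or.inl trivial
private theorem pM_c2103 {k Γ : Type*} [Field k] [AddCommGroup Γ] (ε : Γ → Γ → k) (a : Fin 4 → Γ) :
    pMult ε c2103 a = -(ε (a 0) (a 1) * ε (a 0) (a 2) * ε (a 1) (a 2)) := by
  simp (config := { decide := true }) [pMult, Finset.prod_filter, Fintype.prod_prod_type,
    Fin.prod_univ_four, show Equiv.Perm.sign c2103 = -1 by decide]
  try ring
  try exact Or.inl trivial
private theorem pM_c2130 {k Γ : Type*} [Field k] [AddCommGroup Γ] (ε : Γ → Γ → k) (a : Fin 4 → Γ) :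
    pMult ε c2130 a = (ε (a 0) (a 1) * ε (a 0) (a 2) * ε (a 0) (a 3) * ε (a 1) (a 2)) := by
  simp (config := { decide := true }) [pMult, Finset.prod_filter, Fintype.prod_prod_type,
    Fin.prod_univ_four, show Equiv.Perm.sign c2130 = 1 by decide]
  try ring
  try exact Or.inl trivial
private theorem pM_c2301 {k Γ : Type*} [Field k] [AddCommGroup Γ] (ε : Γ → Γ → k) (a : Fin 4 → Γ) :
    pMult ε c2301 a = (ε (a 0) (a 2) * ε (a 0) (a 3) * ε (a 1) (a 2) * ε (a 1) (a 3)) := by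
  simp (config := { decide := true }) [pMult, Finset.prod_filter, Fintype.prod_prod_type,
    Fin.prod_univ_four, show Equiv.Perm.sign c2301 = 1 by decide]
  try ring
  try exact Or.inl trivial
private theorem pM_c2310 {k Γ : Type*} [Field k] [AddCommGroup Γ] (ε : Γ → Γ → k) (a : Fin 4 → Γ) :
    pMult ε c2310 a = -(ε (a 0) (a 1) * ε (a 0) (a 2) * ε (a 0) (a 3) * ε (a 1) (a 2) * ε (a 1) (a 3)) := by
  simp (config := { decide := true }) [pMult, Finset.prod_filter, Fintype.prod_prod_type,
    Fin.prod_univ_four, show Equiv.Perm.sign c2310 = -1 by decide]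
  try ring
  try exact Or.inl trivial
private theorem pM_c3012 {k Γ : Type*} [Field k] [AddCommGroup Γ] (ε : Γ → Γ → k) (a : Fin 4 → Γ) :
    pMult ε c3012 a = -(ε (a 0) (a 3) * ε (a 1) (a 3) * ε (a 2) (a 3)) := by
  simp (config := { decide := true }) [pMult, Finset.prod_filter, Fintype.prod_prod_type,
    Fin.prod_univ_four, show Equiv.Perm.sign c3012 = -1 by decide]
  try ring
  try exact Or.inl trivial
private theorem pM_c3021 {k Γ : Type*} [Field k] [AddCommGroup Γ] (ε : Γ → Γ → k) (a : Fin 4 → Γ) :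
    pMult ε c3021 a = (ε (a 0) (a 3) * ε (a 1) (a 2) * ε (a 1) (a 3) * ε (a 2) (a 3)) := by
  simp (config := { decide := true }) [pMult, Finset.prod_filter, Fintype.prod_prod_type,
    Fin.prod_univ_four, show Equiv.Perm.sign c3021 = 1 by decide]
  try ring
  try exact Or.inl trivial
private theorem pM_c3102 {k Γ : Type*} [Field k] [AddCommGroup Γ] (ε : Γ → Γ → k) (a : Fin 4 → Γ) :
    pMult ε c3102 a = (ε (a 0) (a 1) * ε (a 0) (a 3) * ε (a 1) (a 3) * ε (a 2) (a 3)) := by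
  simp (config := { decide := true }) [pMult, Finset.prod_filter, Fintype.prod_prod_type,
    Fin.prod_univ_four, show Equiv.Perm.sign c3102 = 1 by decide]
  try ring
  try exact Or.inl trivial
private theorem pM_c3120 {k Γ : Type*} [Field k] [AddCommGroup Γ] (ε : Γ → Γ → k) (a : Fin 4 → Γ) :
    pMult ε c3120 a = -(ε (a 0) (a 1) * ε (a 0) (a 2) * ε (a 0) (a 3) * ε (a 1) (a 3) * ε (a 2) (a 3)) := by
  simp (config := { decide := true }) [pMult, Finset.prod_filter, Fintype.prod_prod_type,
    Fin.prod_univ_four, show Equiv.Perm.sign c3120 = -1 by decide]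
  try ring
  try exact Or.inl trivial
private theorem pM_c3201 {k Γ : Type*} [Field k] [AddCommGroup Γ] (ε : Γ → Γ → k) (a : Fin 4 → Γ) :
    pMult ε c3201 a = -(ε (a 0) (a 2) * ε (a 0) (a 3) * ε (a 1) (a 2) * ε (a 1) (a 3) * ε (a 2) (a 3)) := by
  simp (config := { decide := true }) [pMult, Finset.prod_filter, Fintype.prod_prod_type,
    Fin.prod_univ_four, show Equiv.Perm.sign c3201 = -1 by decide]
  try ring
  try exact Or.inl trivial
private theorem pM_c3210 {k Γ : Type*} [Field k] [AddCommGroup Γ] (ε : Γ → Γ → k) (a : Fin 4 → Γ) :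
    pMult ε c3210 a = (ε (a 0) (a 1) * ε (a 0) (a 2) * ε (a 0) (a 3) * ε (a 1) (a 2) * ε (a 1) (a 3) * ε (a 2) (a 3)) := by
  simp (config := { decide := true }) [pMult, Finset.prod_filter, Fintype.prod_prod_type,
    Fin.prod_univ_four, show Equiv.Perm.sign c3210 = 1 by decide]
  try ring
  try exact Or.inl trivial
end Aux

set_option maxHeartbeats 2000000

/-- For a special ε-orthogonal representation, the quadrilinear covariant
`Q` equals `−2 N_{B_g}(μ)` and `−4 β(R_μ)`. -/
theorem stmt17 {k Γ Mg V : Type*} [Field k] [AddCommGroup Γ] [DecidableEq Γ]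
    [AddCommGroup Mg] [Module k Mg] [AddCommGroup V] [Module k V]
    [FiniteDimensional k Mg] [FiniteDimensional k V]
    (h2 : (2 : k) ≠ 0) (h3 : (3 : k) ≠ 0)
    (E : CommutationFactor k Γ)
    (𝒜 : Γ → Submodule k Mg) [DirectSum.Decomposition 𝒜]
    (𝒱 : Γ → Submodule k V) [DirectSum.Decomposition 𝒱]
    (br : Mg →ₗ[k] Mg →ₗ[k] Mg)
    (hbrdeg : ∀ a b : Γ, ∀ x ∈ 𝒜 a, ∀ y ∈ 𝒜 b, br x y ∈ 𝒜 (a + b))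
    (hbrskew : ∀ a b : Γ, ∀ x ∈ 𝒜 a, ∀ y ∈ 𝒜 b, br x y = (-(E.ε a b)) • br y x)
    (hjac : ∀ a b c : Γ, ∀ x ∈ 𝒜 a, ∀ y ∈ 𝒜 b, ∀ z ∈ 𝒜 c,
      E.ε c a • br x (br y z) + E.ε a b • br y (br z x)
        + E.ε b c • br z (br x y) = 0)
    (Bg : Mg →ₗ[k] Mg →ₗ[k] k)
    (hBgdeg : ∀ a b : Γ, a + b ≠ 0 → ∀ x ∈ 𝒜 a, ∀ y ∈ 𝒜 b, Bg x y = 0)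
    (hBgsymm : ∀ a b : Γ, ∀ x ∈ 𝒜 a, ∀ y ∈ 𝒜 b, Bg x y = E.ε a b * Bg y x)
    (hBgad : ∀ a b : Γ, ∀ x ∈ 𝒜 a, ∀ y ∈ 𝒜 b, ∀ z : Mg,
      Bg (br x y) z = -(E.ε a b) * Bg y (br x z))
    (hBgnd : ∀ x : Mg, (∀ y, Bg x y = 0) → x = 0)
    (Bv : V →ₗ[k] V →ₗ[k] k)
    (hBvdeg : ∀ a b : Γ, a + b ≠ 0 → ∀ v ∈ 𝒱 a, ∀ w ∈ 𝒱 b, Bv v w = 0)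
    (hBvsymm : ∀ a b : Γ, ∀ v ∈ 𝒱 a, ∀ w ∈ 𝒱 b, Bv v w = E.ε a b * Bv w v)
    (hBvnd : ∀ v : V, (∀ w, Bv v w = 0) → v = 0)
    (ρ : Mg →ₗ[k] Module.End k V)
    (hρdeg : ∀ a b : Γ, ∀ x ∈ 𝒜 a, ∀ v ∈ 𝒱 b, ρ x v ∈ 𝒱 (a + b))
    (hρmor : ∀ a b : Γ, ∀ x ∈ 𝒜 a, ∀ y ∈ 𝒜 b,
      ρ (br x y) = ρ x * ρ y - E.ε a b • (ρ y * ρ x))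
    (hρskew : ∀ a b : Γ, ∀ x ∈ 𝒜 a, ∀ v ∈ 𝒱 b, ∀ w : V,
      Bv (ρ x v) w + E.ε a b * Bv v (ρ x w) = 0)
    (μ : V →ₗ[k] V →ₗ[k] Mg)
    (hμ : ∀ (x : Mg) (v w : V), Bg x (μ v w) = Bv (ρ x v) w)
    (hsp : ∀ a b c : Γ, ∀ A ∈ 𝒱 a, ∀ B ∈ 𝒱 b, ∀ C ∈ 𝒱 c,
      ρ (μ A B) C + E.ε b c • ρ (μ A C) B
        = Bv A B • C + (E.ε b c * Bv A C) • B - (2 * Bv B C) • A) :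
    ∀ (a : Fin 4 → Γ) (v : Fin 4 → V), (∀ m, v m ∈ 𝒱 (a m)) →
      ((2 : k)⁻¹ * ∑ σ : Equiv.Perm (Fin 4),
          pMult E.ε σ a * Bv (v (σ 0)) (ρ (μ (v (σ 1)) (v (σ 2))) (v (σ 3)))
        = -2 * ∑ σ ∈ Finset.univ.filter
            (fun σ : Equiv.Perm (Fin 4) => σ 0 < σ 1 ∧ σ 2 < σ 3),
            pMult E.ε σ a *
              Bg (μ (v (σ 0)) (v (σ 1))) (μ (v (σ 2)) (v (σ 3)))) ∧
      ((2 : k)⁻¹ * ∑ σ : Equiv.Perm (Fin 4),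
          pMult E.ε σ a * Bv (v (σ 0)) (ρ (μ (v (σ 1)) (v (σ 2))) (v (σ 3)))
        = -4 * (Bv (ρ (μ (v 0) (v 1)) (v 2)) (v 3)
            + E.ε (a 0) (a 1 + a 2) * Bv (ρ (μ (v 1) (v 2)) (v 0)) (v 3)
            + E.ε (a 0 + a 1) (a 2) * Bv (ρ (μ (v 2) (v 0)) (v 1)) (v 3))) := by
  
  intro a v hv
  classical
  have h2' : (2 : k) ≠ 0 := ‹(2 : k) ≠ 0›
  have hne : ∀ x y : Γ, E.ε x y ≠ 0 := fun x y => left_ne_zero_of_mul_eq_one (E.mul_symm x y)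
  have hrev : ∀ x y : Γ, E.ε y x = (E.ε x y)⁻¹ := fun x y =>
    eq_inv_of_mul_eq_one_right (E.mul_symm x y)
  have hcompMg : ∀ (f : Mg →ₗ[k] k), (∀ (b : Γ) (x : Mg), x ∈ 𝒜 b → f x = 0) → ∀ x, f x = 0 := by
    intro f hf x
    conv_lhs => rw [← DirectSum.sum_support_decompose 𝒜 x]
    rw [map_sum]
    exact Finset.sum_eq_zero fun c _ => hf c _ (SetLike.coe_mem _)
  have hnd2 : ∀ z : Mg, (∀ x, Bg x z = 0) → z = 0 := by
    intro z hz
    refine hBgnd z (hcompMg (Bg z) ?_)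
    intro b yb hyb
    have key : ∀ c : Γ, Bg yb ((DirectSum.decompose 𝒜 z c : Mg)) = 0 := by
      intro c
      by_cases hcb : b + c = 0
      · have hsum : ∑ c' ∈ (DirectSum.decompose 𝒜 z).support,
            Bg yb ((DirectSum.decompose 𝒜 z c' : Mg)) = Bg yb ((DirectSum.decompose 𝒜 z c : Mg)) :=
          Finset.sum_eq_single c
            (fun c' _ h' => hBgdeg b c'
              (fun hh => h' (add_left_cancel (hh.trans hcb.symm))) _ hyb _ (SetLike.coe_mem _))
            (fun h => by rw [DFinsupp.notMem_support_iff.mp h, ZeroMemClass.coe_zero, map_zero])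
        rw [← hsum, ← map_sum, DirectSum.sum_support_decompose]
        exact hz yb
      · exact hBgdeg b c hcb _ hyb _ (SetLike.coe_mem _)
    have hsum2 : Bg z yb = ∑ c ∈ (DirectSum.decompose 𝒜 z).support,
        Bg ((DirectSum.decompose 𝒜 z c : Mg)) yb := by
      conv_lhs => rw [← DirectSum.sum_support_decompose 𝒜 z]
      rw [map_sum, LinearMap.sum_apply]
    rw [hsum2]
    refine Finset.sum_eq_zero fun c _ => ?_
    by_cases hcb : c + b = 0
    · rw [hBgsymm c b _ (SetLike.coe_mem _) _ hyb, key c, mul_zero]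
    · exact hBgdeg c b hcb _ (SetLike.coe_mem _) _ hyb
  have hμhom : ∀ i j : Fin 4, μ (v i) (v j) ∈ 𝒜 (a i + a j) := by
    intro i j
    have key : ∀ (b : Γ) (xb : Mg), xb ∈ 𝒜 b →
        Bg xb (μ (v i) (v j) - (DirectSum.decompose 𝒜 (μ (v i) (v j)) (a i + a j) : Mg)) = 0 := by
      intro b xb hxb
      rw [map_sub]
      by_cases hbd : b + (a i + a j) = 0
      · have h2 : Bg xb (μ (v i) (v j))
            = Bg xb ((DirectSum.decompose 𝒜 (μ (v i) (v j)) (a i + a j) : Mg)) := by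
          conv_lhs => rw [← DirectSum.sum_support_decompose 𝒜 (μ (v i) (v j))]
          rw [map_sum]
          exact Finset.sum_eq_single _
            (fun c' _ h' => hBgdeg b c'
              (fun hh => h' (add_left_cancel (hh.trans hbd.symm))) _ hxb _ (SetLike.coe_mem _))
            (fun h => by rw [DFinsupp.notMem_support_iff.mp h, ZeroMemClass.coe_zero, map_zero])
        rw [h2, sub_self]
      · have h1 : Bg xb (μ (v i) (v j)) = 0 := by
          rw [hμ]
          exact hBvdeg (b + a i) (a j) (fun hh => hbd (by rwa [add_assoc] at hh)) _
            (hρdeg b (a i) xb hxb _ (hv i)) _ (hv j)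
        rw [h1, hBgdeg b (a i + a j) hbd _ hxb _ (SetLike.coe_mem _), sub_zero]
    have hz : μ (v i) (v j) - (DirectSum.decompose 𝒜 (μ (v i) (v j)) (a i + a j) : Mg) = 0 := by
      apply hnd2
      intro x
      have h := hcompMg
        (Bg.flip (μ (v i) (v j) - (DirectSum.decompose 𝒜 (μ (v i) (v j)) (a i + a j) : Mg)))
        (fun b xb hxb => by rw [LinearMap.flip_apply]; exact key b xb hxb) x
      rwa [LinearMap.flip_apply] at h
    rw [sub_eq_zero.mp hz]
    exact SetLike.coe_mem _
  have hμanti : ∀ i j : Fin 4, μ (v i) (v j) = (-E.ε (a i) (a j)) • μ (v j) (v i) := by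
    intro i j
    have hc : ∀ (b : Γ) (xb : Mg), xb ∈ 𝒜 b →
        Bg xb (μ (v i) (v j) + E.ε (a i) (a j) • μ (v j) (v i)) = 0 := by
      intro b xb hxb
      rw [map_add, map_smul, smul_eq_mul, hμ, hμ]
      have h1 := hρskew b (a i) xb hxb (v i) (hv i) (v j)
      have h2 := hBvsymm (a i) (b + a j) (v i) (hv i) (ρ xb (v j)) (hρdeg b (a j) xb hxb (v j) (hv j))
      simp only [E.add_snd] at h2
      rw [eq_neg_of_add_eq_zero_left h1, h2, hrev (a i) b]
      field_simp [hne (a i) b]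
      try ring
    have key : ∀ x : Mg, Bg x (μ (v i) (v j) + E.ε (a i) (a j) • μ (v j) (v i)) = 0 := by
      intro x
      have h := hcompMg (Bg.flip (μ (v i) (v j) + E.ε (a i) (a j) • μ (v j) (v i)))
        (fun b xb hxb => by rw [LinearMap.flip_apply]; exact hc b xb hxb) x
      rwa [LinearMap.flip_apply] at h
    have h0 := eq_neg_of_add_eq_zero_left (hnd2 _ key)
    rwa [← neg_smul] at h0
  have hA : ∀ i j l m : Fin 4, Bv (ρ (μ (v i) (v j)) (v l)) (v m)
      = -E.ε (a i) (a j) * Bv (ρ (μ (v j) (v i)) (v l)) (v m) := by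
    intro i j l m
    rw [hμanti i j]
    simp only [map_smul, LinearMap.smul_apply, smul_eq_mul, neg_smul, neg_mul, map_neg,
      LinearMap.neg_apply]
    try ring
  have hB : ∀ i j l m : Fin 4, Bv (ρ (μ (v i) (v j)) (v l)) (v m)
      = -E.ε (a l) (a m) * Bv (ρ (μ (v i) (v j)) (v m)) (v l) := by
    intro i j l m
    have h1 := hρskew (a i + a j) (a l) (μ (v i) (v j)) (hμhom i j) (v l) (hv l) (v m)
    have h2 := hBvsymm (a l) (a i + a j + a m) (v l) (hv l) (ρ (μ (v i) (v j)) (v m))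
      (hρdeg (a i + a j) (a m) (μ (v i) (v j)) (hμhom i j) (v m) (hv m))
    simp only [E.add_snd] at h2
    simp only [E.add_fst] at h1
    rw [eq_neg_of_add_eq_zero_left h1, h2, hrev (a i) (a l), hrev (a j) (a l)]
    field_simp [hne (a i) (a l), hne (a j) (a l)]
    try ring
  have hE : ∀ i j l m : Fin 4, Bv (ρ (μ (v i) (v j)) (v l)) (v m)
      = E.ε (a i) (a l) * E.ε (a i) (a m) * E.ε (a j) (a l) * E.ε (a j) (a m)
        * Bv (ρ (μ (v l) (v m)) (v i)) (v j) := by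
    intro i j l m
    rw [← hμ, ← hμ, hBgsymm (a i + a j) (a l + a m) _ (hμhom i j) _ (hμhom l m)]
    simp only [E.add_fst, E.add_snd]
    try ring
  have hT : ∀ i j l m : Fin 4, Bv (v i) (ρ (μ (v j) (v l)) (v m))
      = E.ε (a i) (a j) * E.ε (a i) (a l) * E.ε (a i) (a m)
        * Bv (ρ (μ (v j) (v l)) (v m)) (v i) := by
    intro i j l m
    rw [hBvsymm (a i) (a j + a l + a m) (v i) (hv i) (ρ (μ (v j) (v l)) (v m))
      (hρdeg (a j + a l) (a m) (μ (v j) (v l)) (hμhom j l) (v m) (hv m))]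
    simp only [E.add_snd]
    try ring
  have hBgS : ∀ i j l m : Fin 4, Bg (μ (v i) (v j)) (μ (v l) (v m))
      = Bv (ρ (μ (v i) (v j)) (v l)) (v m) := fun i j l m => hμ _ _ _
  have H0 : pMult E.ε c0123 a * Bv (v (c0123 0)) (ρ (μ (v (c0123 1)) (v (c0123 2))) (v (c0123 3)))
      = -(E.ε (a 1) (a 3) * E.ε (a 2) (a 3)) * Bv (ρ (μ (v 0) (v 3)) (v 1)) (v 2) := by
    simp only [c0123_a0, c0123_a1, c0123_a2, c0123_a3, pM_c0123]
    rw [hT 0 1 2 3, hB 1 2 3 0, hE 1 2 0 3]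
    linear_combination ((-1) * (Bv (ρ (μ (v 0) (v 3)) (v 1)) (v 2) * E.ε (a 1) (a 3) * E.ε (a 2) (a 3))) * E.mul_symm (a 0) (a 1)
      + ((-1) * (Bv (ρ (μ (v 0) (v 3)) (v 1)) (v 2) * E.ε (a 1) (a 3) * E.ε (a 2) (a 3) * (E.ε (a 0) (a 1) * E.ε (a 1) (a 0)))) * E.mul_symm (a 0) (a 2)
      + ((-1) * (Bv (ρ (μ (v 0) (v 3)) (v 1)) (v 2) * E.ε (a 1) (a 3) * E.ε (a 2) (a 3) * (E.ε (a 0) (a 1) * E.ε (a 1) (a 0)) * (E.ε (a 0) (a 2) * E.ε (a 2) (a 0)))) * E.mul_symm (a 0) (a 3)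
  have H1 : pMult E.ε c0132 a * Bv (v (c0132 0)) (ρ (μ (v (c0132 1)) (v (c0132 2))) (v (c0132 3)))
      = (E.ε (a 1) (a 2)) * Bv (ρ (μ (v 0) (v 2)) (v 1)) (v 3) := by
    simp only [c0132_a0, c0132_a1, c0132_a2, c0132_a3, pM_c0132]
    rw [hT 0 1 3 2, hB 1 3 2 0, hE 1 3 0 2]
    linear_combination ((Bv (ρ (μ (v 0) (v 2)) (v 1)) (v 3) * E.ε (a 1) (a 2))) * E.mul_symm (a 0) (a 1)
      + ((Bv (ρ (μ (v 0) (v 2)) (v 1)) (v 3) * E.ε (a 1) (a 2) * (E.ε (a 0) (a 1) * E.ε (a 1) (a 0)))) * E.mul_symm (a 0) (a 2)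
      + ((Bv (ρ (μ (v 0) (v 2)) (v 1)) (v 3) * E.ε (a 1) (a 2) * (E.ε (a 0) (a 1) * E.ε (a 1) (a 0)) * (E.ε (a 0) (a 2) * E.ε (a 2) (a 0)))) * E.mul_symm (a 0) (a 3)
      + ((Bv (ρ (μ (v 0) (v 2)) (v 1)) (v 3) * E.ε (a 1) (a 2) * (E.ε (a 0) (a 1) * E.ε (a 1) (a 0)) * (E.ε (a 0) (a 2) * E.ε (a 2) (a 0)) * (E.ε (a 0) (a 3) * E.ε (a 3) (a 0)))) * E.mul_symm (a 2) (a 3)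
  have H2 : pMult E.ε c0213 a * Bv (v (c0213 0)) (ρ (μ (v (c0213 1)) (v (c0213 2))) (v (c0213 3)))
      = -(E.ε (a 1) (a 3) * E.ε (a 2) (a 3)) * Bv (ρ (μ (v 0) (v 3)) (v 1)) (v 2) := by
    simp only [c0213_a0, c0213_a1, c0213_a2, c0213_a3, pM_c0213]
    rw [hT 0 2 1 3, hA 2 1 3 0, hB 1 2 3 0, hE 1 2 0 3]
    linear_combination ((-1) * (Bv (ρ (μ (v 0) (v 3)) (v 1)) (v 2) * E.ε (a 1) (a 3) * E.ε (a 2) (a 3))) * E.mul_symm (a 0) (a 1)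
      + ((-1) * (Bv (ρ (μ (v 0) (v 3)) (v 1)) (v 2) * E.ε (a 1) (a 3) * E.ε (a 2) (a 3) * (E.ε (a 0) (a 1) * E.ε (a 1) (a 0)))) * E.mul_symm (a 0) (a 2)
      + ((-1) * (Bv (ρ (μ (v 0) (v 3)) (v 1)) (v 2) * E.ε (a 1) (a 3) * E.ε (a 2) (a 3) * (E.ε (a 0) (a 1) * E.ε (a 1) (a 0)) * (E.ε (a 0) (a 2) * E.ε (a 2) (a 0)))) * E.mul_symm (a 0) (a 3)
      + ((-1) * (Bv (ρ (μ (v 0) (v 3)) (v 1)) (v 2) * E.ε (a 1) (a 3) * E.ε (a 2) (a 3) * (E.ε (a 0) (a 1) * E.ε (a 1) (a 0)) * (E.ε (a 0) (a 2) * E.ε (a 2) (a 0)) * (E.ε (a 0) (a 3) * E.ε (a 3) (a 0)))) * E.mul_symm (a 1) (a 2)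
  have H3 : pMult E.ε c0231 a * Bv (v (c0231 0)) (ρ (μ (v (c0231 1)) (v (c0231 2))) (v (c0231 3)))
      = -Bv (ρ (μ (v 0) (v 1)) (v 2)) (v 3) := by
    simp only [c0231_a0, c0231_a1, c0231_a2, c0231_a3, pM_c0231]
    rw [hT 0 2 3 1, hB 2 3 1 0, hE 2 3 0 1]
    linear_combination ((-1) * (Bv (ρ (μ (v 0) (v 1)) (v 2)) (v 3))) * E.mul_symm (a 0) (a 1)
      + ((-1) * (Bv (ρ (μ (v 0) (v 1)) (v 2)) (v 3) * (E.ε (a 0) (a 1) * E.ε (a 1) (a 0)))) * E.mul_symm (a 0) (a 2)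
      + ((-1) * (Bv (ρ (μ (v 0) (v 1)) (v 2)) (v 3) * (E.ε (a 0) (a 1) * E.ε (a 1) (a 0)) * (E.ε (a 0) (a 2) * E.ε (a 2) (a 0)))) * E.mul_symm (a 0) (a 3)
      + ((-1) * (Bv (ρ (μ (v 0) (v 1)) (v 2)) (v 3) * (E.ε (a 0) (a 1) * E.ε (a 1) (a 0)) * (E.ε (a 0) (a 2) * E.ε (a 2) (a 0)) * (E.ε (a 0) (a 3) * E.ε (a 3) (a 0)))) * E.mul_symm (a 1) (a 2)
      + ((-1) * (Bv (ρ (μ (v 0) (v 1)) (v 2)) (v 3) * (E.ε (a 0) (a 1) * E.ε (a 1) (a 0)) * (E.ε (a 0) (a 2) * E.ε (a 2) (a 0)) * (E.ε (a 0) (a 3) * E.ε (a 3) (a 0)) * (E.ε (a 1) (a 2) * E.ε (a 2) (a 1)))) * E.mul_symm (a 1) (a 3)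
  have H4 : pMult E.ε c0312 a * Bv (v (c0312 0)) (ρ (μ (v (c0312 1)) (v (c0312 2))) (v (c0312 3)))
      = (E.ε (a 1) (a 2)) * Bv (ρ (μ (v 0) (v 2)) (v 1)) (v 3) := by
    simp only [c0312_a0, c0312_a1, c0312_a2, c0312_a3, pM_c0312]
    rw [hT 0 3 1 2, hA 3 1 2 0, hB 1 3 2 0, hE 1 3 0 2]
    linear_combination ((Bv (ρ (μ (v 0) (v 2)) (v 1)) (v 3) * E.ε (a 1) (a 2))) * E.mul_symm (a 0) (a 1)
      + ((Bv (ρ (μ (v 0) (v 2)) (v 1)) (v 3) * E.ε (a 1) (a 2) * (E.ε (a 0) (a 1) * E.ε (a 1) (a 0)))) * E.mul_symm (a 0) (a 2)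
      + ((Bv (ρ (μ (v 0) (v 2)) (v 1)) (v 3) * E.ε (a 1) (a 2) * (E.ε (a 0) (a 1) * E.ε (a 1) (a 0)) * (E.ε (a 0) (a 2) * E.ε (a 2) (a 0)))) * E.mul_symm (a 0) (a 3)
      + ((Bv (ρ (μ (v 0) (v 2)) (v 1)) (v 3) * E.ε (a 1) (a 2) * (E.ε (a 0) (a 1) * E.ε (a 1) (a 0)) * (E.ε (a 0) (a 2) * E.ε (a 2) (a 0)) * (E.ε (a 0) (a 3) * E.ε (a 3) (a 0)))) * E.mul_symm (a 1) (a 3)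
      + ((Bv (ρ (μ (v 0) (v 2)) (v 1)) (v 3) * E.ε (a 1) (a 2) * (E.ε (a 0) (a 1) * E.ε (a 1) (a 0)) * (E.ε (a 0) (a 2) * E.ε (a 2) (a 0)) * (E.ε (a 0) (a 3) * E.ε (a 3) (a 0)) * (E.ε (a 1) (a 3) * E.ε (a 3) (a 1)))) * E.mul_symm (a 2) (a 3)
  have H5 : pMult E.ε c0321 a * Bv (v (c0321 0)) (ρ (μ (v (c0321 1)) (v (c0321 2))) (v (c0321 3)))
      = -Bv (ρ (μ (v 0) (v 1)) (v 2)) (v 3) := by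
    simp only [c0321_a0, c0321_a1, c0321_a2, c0321_a3, pM_c0321]
    rw [hT 0 3 2 1, hA 3 2 1 0, hB 2 3 1 0, hE 2 3 0 1]
    linear_combination ((-1) * (Bv (ρ (μ (v 0) (v 1)) (v 2)) (v 3))) * E.mul_symm (a 0) (a 1)
      + ((-1) * (Bv (ρ (μ (v 0) (v 1)) (v 2)) (v 3) * (E.ε (a 0) (a 1) * E.ε (a 1) (a 0)))) * E.mul_symm (a 0) (a 2)
      + ((-1) * (Bv (ρ (μ (v 0) (v 1)) (v 2)) (v 3) * (E.ε (a 0) (a 1) * E.ε (a 1) (a 0)) * (E.ε (a 0) (a 2) * E.ε (a 2) (a 0)))) * E.mul_symm (a 0) (a 3)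
      + ((-1) * (Bv (ρ (μ (v 0) (v 1)) (v 2)) (v 3) * (E.ε (a 0) (a 1) * E.ε (a 1) (a 0)) * (E.ε (a 0) (a 2) * E.ε (a 2) (a 0)) * (E.ε (a 0) (a 3) * E.ε (a 3) (a 0)))) * E.mul_symm (a 1) (a 2)
      + ((-1) * (Bv (ρ (μ (v 0) (v 1)) (v 2)) (v 3) * (E.ε (a 0) (a 1) * E.ε (a 1) (a 0)) * (E.ε (a 0) (a 2) * E.ε (a 2) (a 0)) * (E.ε (a 0) (a 3) * E.ε (a 3) (a 0)) * (E.ε (a 1) (a 2) * E.ε (a 2) (a 1)))) * E.mul_symm (a 1) (a 3)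
      + ((-1) * (Bv (ρ (μ (v 0) (v 1)) (v 2)) (v 3) * (E.ε (a 0) (a 1) * E.ε (a 1) (a 0)) * (E.ε (a 0) (a 2) * E.ε (a 2) (a 0)) * (E.ε (a 0) (a 3) * E.ε (a 3) (a 0)) * (E.ε (a 1) (a 2) * E.ε (a 2) (a 1)) * (E.ε (a 1) (a 3) * E.ε (a 3) (a 1)))) * E.mul_symm (a 2) (a 3)
  have H6 : pMult E.ε c1023 a * Bv (v (c1023 0)) (ρ (μ (v (c1023 1)) (v (c1023 2))) (v (c1023 3)))
      = (E.ε (a 1) (a 2)) * Bv (ρ (μ (v 0) (v 2)) (v 1)) (v 3) := by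
    simp only [c1023_a0, c1023_a1, c1023_a2, c1023_a3, pM_c1023]
    rw [hT 1 0 2 3, hB 0 2 3 1]
    linear_combination ((Bv (ρ (μ (v 0) (v 2)) (v 1)) (v 3) * E.ε (a 1) (a 2))) * E.mul_symm (a 0) (a 1)
      + ((Bv (ρ (μ (v 0) (v 2)) (v 1)) (v 3) * E.ε (a 1) (a 2) * (E.ε (a 0) (a 1) * E.ε (a 1) (a 0)))) * E.mul_symm (a 1) (a 3)
  have H7 : pMult E.ε c1032 a * Bv (v (c1032 0)) (ρ (μ (v (c1032 1)) (v (c1032 2))) (v (c1032 3)))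
      = -(E.ε (a 1) (a 3) * E.ε (a 2) (a 3)) * Bv (ρ (μ (v 0) (v 3)) (v 1)) (v 2) := by
    simp only [c1032_a0, c1032_a1, c1032_a2, c1032_a3, pM_c1032]
    rw [hT 1 0 3 2, hB 0 3 2 1]
    linear_combination ((-1) * (Bv (ρ (μ (v 0) (v 3)) (v 1)) (v 2) * E.ε (a 1) (a 3) * E.ε (a 2) (a 3))) * E.mul_symm (a 0) (a 1)
      + ((-1) * (Bv (ρ (μ (v 0) (v 3)) (v 1)) (v 2) * E.ε (a 1) (a 3) * E.ε (a 2) (a 3) * (E.ε (a 0) (a 1) * E.ε (a 1) (a 0)))) * E.mul_symm (a 1) (a 2)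
  have H8 : pMult E.ε c1203 a * Bv (v (c1203 0)) (ρ (μ (v (c1203 1)) (v (c1203 2))) (v (c1203 3)))
      = (E.ε (a 1) (a 2)) * Bv (ρ (μ (v 0) (v 2)) (v 1)) (v 3) := by
    simp only [c1203_a0, c1203_a1, c1203_a2, c1203_a3, pM_c1203]
    rw [hT 1 2 0 3, hA 2 0 3 1, hB 0 2 3 1]
    linear_combination ((Bv (ρ (μ (v 0) (v 2)) (v 1)) (v 3) * E.ε (a 1) (a 2))) * E.mul_symm (a 0) (a 1)
      + ((Bv (ρ (μ (v 0) (v 2)) (v 1)) (v 3) * E.ε (a 1) (a 2) * (E.ε (a 0) (a 1) * E.ε (a 1) (a 0)))) * E.mul_symm (a 0) (a 2)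
      + ((Bv (ρ (μ (v 0) (v 2)) (v 1)) (v 3) * E.ε (a 1) (a 2) * (E.ε (a 0) (a 1) * E.ε (a 1) (a 0)) * (E.ε (a 0) (a 2) * E.ε (a 2) (a 0)))) * E.mul_symm (a 1) (a 3)
  have H9 : pMult E.ε c1230 a * Bv (v (c1230 0)) (ρ (μ (v (c1230 1)) (v (c1230 2))) (v (c1230 3)))
      = -Bv (ρ (μ (v 0) (v 1)) (v 2)) (v 3) := by
    simp only [c1230_a0, c1230_a1, c1230_a2, c1230_a3, pM_c1230]
    rw [hT 1 2 3 0, hE 2 3 0 1]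
    linear_combination ((-1) * (Bv (ρ (μ (v 0) (v 1)) (v 2)) (v 3))) * E.mul_symm (a 0) (a 1)
      + ((-1) * (Bv (ρ (μ (v 0) (v 1)) (v 2)) (v 3) * (E.ε (a 0) (a 1) * E.ε (a 1) (a 0)))) * E.mul_symm (a 0) (a 2)
      + ((-1) * (Bv (ρ (μ (v 0) (v 1)) (v 2)) (v 3) * (E.ε (a 0) (a 1) * E.ε (a 1) (a 0)) * (E.ε (a 0) (a 2) * E.ε (a 2) (a 0)))) * E.mul_symm (a 0) (a 3)
      + ((-1) * (Bv (ρ (μ (v 0) (v 1)) (v 2)) (v 3) * (E.ε (a 0) (a 1) * E.ε (a 1) (a 0)) * (E.ε (a 0) (a 2) * E.ε (a 2) (a 0)) * (E.ε (a 0) (a 3) * E.ε (a 3) (a 0)))) * E.mul_symm (a 1) (a 2)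
      + ((-1) * (Bv (ρ (μ (v 0) (v 1)) (v 2)) (v 3) * (E.ε (a 0) (a 1) * E.ε (a 1) (a 0)) * (E.ε (a 0) (a 2) * E.ε (a 2) (a 0)) * (E.ε (a 0) (a 3) * E.ε (a 3) (a 0)) * (E.ε (a 1) (a 2) * E.ε (a 2) (a 1)))) * E.mul_symm (a 1) (a 3)
  have H10 : pMult E.ε c1302 a * Bv (v (c1302 0)) (ρ (μ (v (c1302 1)) (v (c1302 2))) (v (c1302 3)))
      = -(E.ε (a 1) (a 3) * E.ε (a 2) (a 3)) * Bv (ρ (μ (v 0) (v 3)) (v 1)) (v 2) := by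
    simp only [c1302_a0, c1302_a1, c1302_a2, c1302_a3, pM_c1302]
    rw [hT 1 3 0 2, hA 3 0 2 1, hB 0 3 2 1]
    linear_combination ((-1) * (Bv (ρ (μ (v 0) (v 3)) (v 1)) (v 2) * E.ε (a 1) (a 3) * E.ε (a 2) (a 3))) * E.mul_symm (a 0) (a 1)
      + ((-1) * (Bv (ρ (μ (v 0) (v 3)) (v 1)) (v 2) * E.ε (a 1) (a 3) * E.ε (a 2) (a 3) * (E.ε (a 0) (a 1) * E.ε (a 1) (a 0)))) * E.mul_symm (a 0) (a 3)
      + ((-1) * (Bv (ρ (μ (v 0) (v 3)) (v 1)) (v 2) * E.ε (a 1) (a 3) * E.ε (a 2) (a 3) * (E.ε (a 0) (a 1) * E.ε (a 1) (a 0)) * (E.ε (a 0) (a 3) * E.ε (a 3) (a 0)))) * E.mul_symm (a 1) (a 2)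
  have H11 : pMult E.ε c1320 a * Bv (v (c1320 0)) (ρ (μ (v (c1320 1)) (v (c1320 2))) (v (c1320 3)))
      = -Bv (ρ (μ (v 0) (v 1)) (v 2)) (v 3) := by
    simp only [c1320_a0, c1320_a1, c1320_a2, c1320_a3, pM_c1320]
    rw [hT 1 3 2 0, hA 3 2 0 1, hE 2 3 0 1]
    linear_combination ((-1) * (Bv (ρ (μ (v 0) (v 1)) (v 2)) (v 3))) * E.mul_symm (a 0) (a 1)
      + ((-1) * (Bv (ρ (μ (v 0) (v 1)) (v 2)) (v 3) * (E.ε (a 0) (a 1) * E.ε (a 1) (a 0)))) * E.mul_symm (a 0) (a 2)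
      + ((-1) * (Bv (ρ (μ (v 0) (v 1)) (v 2)) (v 3) * (E.ε (a 0) (a 1) * E.ε (a 1) (a 0)) * (E.ε (a 0) (a 2) * E.ε (a 2) (a 0)))) * E.mul_symm (a 0) (a 3)
      + ((-1) * (Bv (ρ (μ (v 0) (v 1)) (v 2)) (v 3) * (E.ε (a 0) (a 1) * E.ε (a 1) (a 0)) * (E.ε (a 0) (a 2) * E.ε (a 2) (a 0)) * (E.ε (a 0) (a 3) * E.ε (a 3) (a 0)))) * E.mul_symm (a 1) (a 2)
      + ((-1) * (Bv (ρ (μ (v 0) (v 1)) (v 2)) (v 3) * (E.ε (a 0) (a 1) * E.ε (a 1) (a 0)) * (E.ε (a 0) (a 2) * E.ε (a 2) (a 0)) * (E.ε (a 0) (a 3) * E.ε (a 3) (a 0)) * (E.ε (a 1) (a 2) * E.ε (a 2) (a 1)))) * E.mul_symm (a 1) (a 3)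
      + ((-1) * (Bv (ρ (μ (v 0) (v 1)) (v 2)) (v 3) * (E.ε (a 0) (a 1) * E.ε (a 1) (a 0)) * (E.ε (a 0) (a 2) * E.ε (a 2) (a 0)) * (E.ε (a 0) (a 3) * E.ε (a 3) (a 0)) * (E.ε (a 1) (a 2) * E.ε (a 2) (a 1)) * (E.ε (a 1) (a 3) * E.ε (a 3) (a 1)))) * E.mul_symm (a 2) (a 3)
  have H12 : pMult E.ε c2013 a * Bv (v (c2013 0)) (ρ (μ (v (c2013 1)) (v (c2013 2))) (v (c2013 3)))
      = -Bv (ρ (μ (v 0) (v 1)) (v 2)) (v 3) := by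
    simp only [c2013_a0, c2013_a1, c2013_a2, c2013_a3, pM_c2013]
    rw [hT 2 0 1 3, hB 0 1 3 2]
    linear_combination ((-1) * (Bv (ρ (μ (v 0) (v 1)) (v 2)) (v 3))) * E.mul_symm (a 0) (a 2)
      + ((-1) * (Bv (ρ (μ (v 0) (v 1)) (v 2)) (v 3) * (E.ε (a 0) (a 2) * E.ε (a 2) (a 0)))) * E.mul_symm (a 1) (a 2)
      + ((-1) * (Bv (ρ (μ (v 0) (v 1)) (v 2)) (v 3) * (E.ε (a 0) (a 2) * E.ε (a 2) (a 0)) * (E.ε (a 1) (a 2) * E.ε (a 2) (a 1)))) * E.mul_symm (a 2) (a 3)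
  have H13 : pMult E.ε c2031 a * Bv (v (c2031 0)) (ρ (μ (v (c2031 1)) (v (c2031 2))) (v (c2031 3)))
      = -(E.ε (a 1) (a 3) * E.ε (a 2) (a 3)) * Bv (ρ (μ (v 0) (v 3)) (v 1)) (v 2) := by
    simp only [c2031_a0, c2031_a1, c2031_a2, c2031_a3, pM_c2031]
    rw [hT 2 0 3 1]
    linear_combination ((-1) * (Bv (ρ (μ (v 0) (v 3)) (v 1)) (v 2) * E.ε (a 1) (a 3) * E.ε (a 2) (a 3))) * E.mul_symm (a 0) (a 2)
      + ((-1) * (Bv (ρ (μ (v 0) (v 3)) (v 1)) (v 2) * E.ε (a 1) (a 3) * E.ε (a 2) (a 3) * (E.ε (a 0) (a 2) * E.ε (a 2) (a 0)))) * E.mul_symm (a 1) (a 2)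
  have H14 : pMult E.ε c2103 a * Bv (v (c2103 0)) (ρ (μ (v (c2103 1)) (v (c2103 2))) (v (c2103 3)))
      = -Bv (ρ (μ (v 0) (v 1)) (v 2)) (v 3) := by
    simp only [c2103_a0, c2103_a1, c2103_a2, c2103_a3, pM_c2103]
    rw [hT 2 1 0 3, hA 1 0 3 2, hB 0 1 3 2]
    linear_combination ((-1) * (Bv (ρ (μ (v 0) (v 1)) (v 2)) (v 3))) * E.mul_symm (a 0) (a 1)
      + ((-1) * (Bv (ρ (μ (v 0) (v 1)) (v 2)) (v 3) * (E.ε (a 0) (a 1) * E.ε (a 1) (a 0)))) * E.mul_symm (a 0) (a 2)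
      + ((-1) * (Bv (ρ (μ (v 0) (v 1)) (v 2)) (v 3) * (E.ε (a 0) (a 1) * E.ε (a 1) (a 0)) * (E.ε (a 0) (a 2) * E.ε (a 2) (a 0)))) * E.mul_symm (a 1) (a 2)
      + ((-1) * (Bv (ρ (μ (v 0) (v 1)) (v 2)) (v 3) * (E.ε (a 0) (a 1) * E.ε (a 1) (a 0)) * (E.ε (a 0) (a 2) * E.ε (a 2) (a 0)) * (E.ε (a 1) (a 2) * E.ε (a 2) (a 1)))) * E.mul_symm (a 2) (a 3)
  have H15 : pMult E.ε c2130 a * Bv (v (c2130 0)) (ρ (μ (v (c2130 1)) (v (c2130 2))) (v (c2130 3)))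
      = (E.ε (a 1) (a 2)) * Bv (ρ (μ (v 0) (v 2)) (v 1)) (v 3) := by
    simp only [c2130_a0, c2130_a1, c2130_a2, c2130_a3, pM_c2130]
    rw [hT 2 1 3 0, hE 1 3 0 2]
    linear_combination ((Bv (ρ (μ (v 0) (v 2)) (v 1)) (v 3) * E.ε (a 1) (a 2))) * E.mul_symm (a 0) (a 1)
      + ((Bv (ρ (μ (v 0) (v 2)) (v 1)) (v 3) * E.ε (a 1) (a 2) * (E.ε (a 0) (a 1) * E.ε (a 1) (a 0)))) * E.mul_symm (a 0) (a 2)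
      + ((Bv (ρ (μ (v 0) (v 2)) (v 1)) (v 3) * E.ε (a 1) (a 2) * (E.ε (a 0) (a 1) * E.ε (a 1) (a 0)) * (E.ε (a 0) (a 2) * E.ε (a 2) (a 0)))) * E.mul_symm (a 0) (a 3)
      + ((Bv (ρ (μ (v 0) (v 2)) (v 1)) (v 3) * E.ε (a 1) (a 2) * (E.ε (a 0) (a 1) * E.ε (a 1) (a 0)) * (E.ε (a 0) (a 2) * E.ε (a 2) (a 0)) * (E.ε (a 0) (a 3) * E.ε (a 3) (a 0)))) * E.mul_symm (a 1) (a 2)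
      + ((Bv (ρ (μ (v 0) (v 2)) (v 1)) (v 3) * E.ε (a 1) (a 2) * (E.ε (a 0) (a 1) * E.ε (a 1) (a 0)) * (E.ε (a 0) (a 2) * E.ε (a 2) (a 0)) * (E.ε (a 0) (a 3) * E.ε (a 3) (a 0)) * (E.ε (a 1) (a 2) * E.ε (a 2) (a 1)))) * E.mul_symm (a 2) (a 3)
  have H16 : pMult E.ε c2301 a * Bv (v (c2301 0)) (ρ (μ (v (c2301 1)) (v (c2301 2))) (v (c2301 3)))
      = -(E.ε (a 1) (a 3) * E.ε (a 2) (a 3)) * Bv (ρ (μ (v 0) (v 3)) (v 1)) (v 2) := by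
    simp only [c2301_a0, c2301_a1, c2301_a2, c2301_a3, pM_c2301]
    rw [hT 2 3 0 1, hA 3 0 1 2]
    linear_combination ((-1) * (Bv (ρ (μ (v 0) (v 3)) (v 1)) (v 2) * E.ε (a 1) (a 3) * E.ε (a 2) (a 3))) * E.mul_symm (a 0) (a 2)
      + ((-1) * (Bv (ρ (μ (v 0) (v 3)) (v 1)) (v 2) * E.ε (a 1) (a 3) * E.ε (a 2) (a 3) * (E.ε (a 0) (a 2) * E.ε (a 2) (a 0)))) * E.mul_symm (a 0) (a 3)
      + ((-1) * (Bv (ρ (μ (v 0) (v 3)) (v 1)) (v 2) * E.ε (a 1) (a 3) * E.ε (a 2) (a 3) * (E.ε (a 0) (a 2) * E.ε (a 2) (a 0)) * (E.ε (a 0) (a 3) * E.ε (a 3) (a 0)))) * E.mul_symm (a 1) (a 2)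
  have H17 : pMult E.ε c2310 a * Bv (v (c2310 0)) (ρ (μ (v (c2310 1)) (v (c2310 2))) (v (c2310 3)))
      = (E.ε (a 1) (a 2)) * Bv (ρ (μ (v 0) (v 2)) (v 1)) (v 3) := by
    simp only [c2310_a0, c2310_a1, c2310_a2, c2310_a3, pM_c2310]
    rw [hT 2 3 1 0, hA 3 1 0 2, hE 1 3 0 2]
    linear_combination ((Bv (ρ (μ (v 0) (v 2)) (v 1)) (v 3) * E.ε (a 1) (a 2))) * E.mul_symm (a 0) (a 1)
      + ((Bv (ρ (μ (v 0) (v 2)) (v 1)) (v 3) * E.ε (a 1) (a 2) * (E.ε (a 0) (a 1) * E.ε (a 1) (a 0)))) * E.mul_symm (a 0) (a 2)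
      + ((Bv (ρ (μ (v 0) (v 2)) (v 1)) (v 3) * E.ε (a 1) (a 2) * (E.ε (a 0) (a 1) * E.ε (a 1) (a 0)) * (E.ε (a 0) (a 2) * E.ε (a 2) (a 0)))) * E.mul_symm (a 0) (a 3)
      + ((Bv (ρ (μ (v 0) (v 2)) (v 1)) (v 3) * E.ε (a 1) (a 2) * (E.ε (a 0) (a 1) * E.ε (a 1) (a 0)) * (E.ε (a 0) (a 2) * E.ε (a 2) (a 0)) * (E.ε (a 0) (a 3) * E.ε (a 3) (a 0)))) * E.mul_symm (a 1) (a 2)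
      + ((Bv (ρ (μ (v 0) (v 2)) (v 1)) (v 3) * E.ε (a 1) (a 2) * (E.ε (a 0) (a 1) * E.ε (a 1) (a 0)) * (E.ε (a 0) (a 2) * E.ε (a 2) (a 0)) * (E.ε (a 0) (a 3) * E.ε (a 3) (a 0)) * (E.ε (a 1) (a 2) * E.ε (a 2) (a 1)))) * E.mul_symm (a 1) (a 3)
      + ((Bv (ρ (μ (v 0) (v 2)) (v 1)) (v 3) * E.ε (a 1) (a 2) * (E.ε (a 0) (a 1) * E.ε (a 1) (a 0)) * (E.ε (a 0) (a 2) * E.ε (a 2) (a 0)) * (E.ε (a 0) (a 3) * E.ε (a 3) (a 0)) * (E.ε (a 1) (a 2) * E.ε (a 2) (a 1)) * (E.ε (a 1) (a 3) * E.ε (a 3) (a 1)))) * E.mul_symm (a 2) (a 3)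
  have H18 : pMult E.ε c3012 a * Bv (v (c3012 0)) (ρ (μ (v (c3012 1)) (v (c3012 2))) (v (c3012 3)))
      = -Bv (ρ (μ (v 0) (v 1)) (v 2)) (v 3) := by
    simp only [c3012_a0, c3012_a1, c3012_a2, c3012_a3, pM_c3012]
    rw [hT 3 0 1 2]
    linear_combination ((-1) * (Bv (ρ (μ (v 0) (v 1)) (v 2)) (v 3))) * E.mul_symm (a 0) (a 3)
      + ((-1) * (Bv (ρ (μ (v 0) (v 1)) (v 2)) (v 3) * (E.ε (a 0) (a 3) * E.ε (a 3) (a 0)))) * E.mul_symm (a 1) (a 3)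
      + ((-1) * (Bv (ρ (μ (v 0) (v 1)) (v 2)) (v 3) * (E.ε (a 0) (a 3) * E.ε (a 3) (a 0)) * (E.ε (a 1) (a 3) * E.ε (a 3) (a 1)))) * E.mul_symm (a 2) (a 3)
  have H19 : pMult E.ε c3021 a * Bv (v (c3021 0)) (ρ (μ (v (c3021 1)) (v (c3021 2))) (v (c3021 3)))
      = (E.ε (a 1) (a 2)) * Bv (ρ (μ (v 0) (v 2)) (v 1)) (v 3) := by
    simp only [c3021_a0, c3021_a1, c3021_a2, c3021_a3, pM_c3021]
    rw [hT 3 0 2 1]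
    linear_combination ((Bv (ρ (μ (v 0) (v 2)) (v 1)) (v 3) * E.ε (a 1) (a 2))) * E.mul_symm (a 0) (a 3)
      + ((Bv (ρ (μ (v 0) (v 2)) (v 1)) (v 3) * E.ε (a 1) (a 2) * (E.ε (a 0) (a 3) * E.ε (a 3) (a 0)))) * E.mul_symm (a 1) (a 3)
      + ((Bv (ρ (μ (v 0) (v 2)) (v 1)) (v 3) * E.ε (a 1) (a 2) * (E.ε (a 0) (a 3) * E.ε (a 3) (a 0)) * (E.ε (a 1) (a 3) * E.ε (a 3) (a 1)))) * E.mul_symm (a 2) (a 3)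
  have H20 : pMult E.ε c3102 a * Bv (v (c3102 0)) (ρ (μ (v (c3102 1)) (v (c3102 2))) (v (c3102 3)))
      = -Bv (ρ (μ (v 0) (v 1)) (v 2)) (v 3) := by
    simp only [c3102_a0, c3102_a1, c3102_a2, c3102_a3, pM_c3102]
    rw [hT 3 1 0 2, hA 1 0 2 3]
    linear_combination ((-1) * (Bv (ρ (μ (v 0) (v 1)) (v 2)) (v 3))) * E.mul_symm (a 0) (a 1)
      + ((-1) * (Bv (ρ (μ (v 0) (v 1)) (v 2)) (v 3) * (E.ε (a 0) (a 1) * E.ε (a 1) (a 0)))) * E.mul_symm (a 0) (a 3)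
      + ((-1) * (Bv (ρ (μ (v 0) (v 1)) (v 2)) (v 3) * (E.ε (a 0) (a 1) * E.ε (a 1) (a 0)) * (E.ε (a 0) (a 3) * E.ε (a 3) (a 0)))) * E.mul_symm (a 1) (a 3)
      + ((-1) * (Bv (ρ (μ (v 0) (v 1)) (v 2)) (v 3) * (E.ε (a 0) (a 1) * E.ε (a 1) (a 0)) * (E.ε (a 0) (a 3) * E.ε (a 3) (a 0)) * (E.ε (a 1) (a 3) * E.ε (a 3) (a 1)))) * E.mul_symm (a 2) (a 3)
  have H21 : pMult E.ε c3120 a * Bv (v (c3120 0)) (ρ (μ (v (c3120 1)) (v (c3120 2))) (v (c3120 3)))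
      = -(E.ε (a 1) (a 3) * E.ε (a 2) (a 3)) * Bv (ρ (μ (v 0) (v 3)) (v 1)) (v 2) := by
    simp only [c3120_a0, c3120_a1, c3120_a2, c3120_a3, pM_c3120]
    rw [hT 3 1 2 0, hE 1 2 0 3]
    linear_combination ((-1) * (Bv (ρ (μ (v 0) (v 3)) (v 1)) (v 2) * E.ε (a 1) (a 3) * E.ε (a 2) (a 3))) * E.mul_symm (a 0) (a 1)
      + ((-1) * (Bv (ρ (μ (v 0) (v 3)) (v 1)) (v 2) * E.ε (a 1) (a 3) * E.ε (a 2) (a 3) * (E.ε (a 0) (a 1) * E.ε (a 1) (a 0)))) * E.mul_symm (a 0) (a 2)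
      + ((-1) * (Bv (ρ (μ (v 0) (v 3)) (v 1)) (v 2) * E.ε (a 1) (a 3) * E.ε (a 2) (a 3) * (E.ε (a 0) (a 1) * E.ε (a 1) (a 0)) * (E.ε (a 0) (a 2) * E.ε (a 2) (a 0)))) * E.mul_symm (a 0) (a 3)
      + ((-1) * (Bv (ρ (μ (v 0) (v 3)) (v 1)) (v 2) * E.ε (a 1) (a 3) * E.ε (a 2) (a 3) * (E.ε (a 0) (a 1) * E.ε (a 1) (a 0)) * (E.ε (a 0) (a 2) * E.ε (a 2) (a 0)) * (E.ε (a 0) (a 3) * E.ε (a 3) (a 0)))) * E.mul_symm (a 1) (a 3)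
      + ((-1) * (Bv (ρ (μ (v 0) (v 3)) (v 1)) (v 2) * E.ε (a 1) (a 3) * E.ε (a 2) (a 3) * (E.ε (a 0) (a 1) * E.ε (a 1) (a 0)) * (E.ε (a 0) (a 2) * E.ε (a 2) (a 0)) * (E.ε (a 0) (a 3) * E.ε (a 3) (a 0)) * (E.ε (a 1) (a 3) * E.ε (a 3) (a 1)))) * E.mul_symm (a 2) (a 3)
  have H22 : pMult E.ε c3201 a * Bv (v (c3201 0)) (ρ (μ (v (c3201 1)) (v (c3201 2))) (v (c3201 3)))
      = (E.ε (a 1) (a 2)) * Bv (ρ (μ (v 0) (v 2)) (v 1)) (v 3) := by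
    simp only [c3201_a0, c3201_a1, c3201_a2, c3201_a3, pM_c3201]
    rw [hT 3 2 0 1, hA 2 0 1 3]
    linear_combination ((Bv (ρ (μ (v 0) (v 2)) (v 1)) (v 3) * E.ε (a 1) (a 2))) * E.mul_symm (a 0) (a 2)
      + ((Bv (ρ (μ (v 0) (v 2)) (v 1)) (v 3) * E.ε (a 1) (a 2) * (E.ε (a 0) (a 2) * E.ε (a 2) (a 0)))) * E.mul_symm (a 0) (a 3)
      + ((Bv (ρ (μ (v 0) (v 2)) (v 1)) (v 3) * E.ε (a 1) (a 2) * (E.ε (a 0) (a 2) * E.ε (a 2) (a 0)) * (E.ε (a 0) (a 3) * E.ε (a 3) (a 0)))) * E.mul_symm (a 1) (a 3)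
      + ((Bv (ρ (μ (v 0) (v 2)) (v 1)) (v 3) * E.ε (a 1) (a 2) * (E.ε (a 0) (a 2) * E.ε (a 2) (a 0)) * (E.ε (a 0) (a 3) * E.ε (a 3) (a 0)) * (E.ε (a 1) (a 3) * E.ε (a 3) (a 1)))) * E.mul_symm (a 2) (a 3)
  have H23 : pMult E.ε c3210 a * Bv (v (c3210 0)) (ρ (μ (v (c3210 1)) (v (c3210 2))) (v (c3210 3)))
      = -(E.ε (a 1) (a 3) * E.ε (a 2) (a 3)) * Bv (ρ (μ (v 0) (v 3)) (v 1)) (v 2) := by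
    simp only [c3210_a0, c3210_a1, c3210_a2, c3210_a3, pM_c3210]
    rw [hT 3 2 1 0, hA 2 1 0 3, hE 1 2 0 3]
    linear_combination ((-1) * (Bv (ρ (μ (v 0) (v 3)) (v 1)) (v 2) * E.ε (a 1) (a 3) * E.ε (a 2) (a 3))) * E.mul_symm (a 0) (a 1)
      + ((-1) * (Bv (ρ (μ (v 0) (v 3)) (v 1)) (v 2) * E.ε (a 1) (a 3) * E.ε (a 2) (a 3) * (E.ε (a 0) (a 1) * E.ε (a 1) (a 0)))) * E.mul_symm (a 0) (a 2)
      + ((-1) * (Bv (ρ (μ (v 0) (v 3)) (v 1)) (v 2) * E.ε (a 1) (a 3) * E.ε (a 2) (a 3) * (E.ε (a 0) (a 1) * E.ε (a 1) (a 0)) * (E.ε (a 0) (a 2) * E.ε (a 2) (a 0)))) * E.mul_symm (a 0) (a 3)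
      + ((-1) * (Bv (ρ (μ (v 0) (v 3)) (v 1)) (v 2) * E.ε (a 1) (a 3) * E.ε (a 2) (a 3) * (E.ε (a 0) (a 1) * E.ε (a 1) (a 0)) * (E.ε (a 0) (a 2) * E.ε (a 2) (a 0)) * (E.ε (a 0) (a 3) * E.ε (a 3) (a 0)))) * E.mul_symm (a 1) (a 2)
      + ((-1) * (Bv (ρ (μ (v 0) (v 3)) (v 1)) (v 2) * E.ε (a 1) (a 3) * E.ε (a 2) (a 3) * (E.ε (a 0) (a 1) * E.ε (a 1) (a 0)) * (E.ε (a 0) (a 2) * E.ε (a 2) (a 0)) * (E.ε (a 0) (a 3) * E.ε (a 3) (a 0)) * (E.ε (a 1) (a 2) * E.ε (a 2) (a 1)))) * E.mul_symm (a 1) (a 3)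
      + ((-1) * (Bv (ρ (μ (v 0) (v 3)) (v 1)) (v 2) * E.ε (a 1) (a 3) * E.ε (a 2) (a 3) * (E.ε (a 0) (a 1) * E.ε (a 1) (a 0)) * (E.ε (a 0) (a 2) * E.ε (a 2) (a 0)) * (E.ε (a 0) (a 3) * E.ε (a 3) (a 0)) * (E.ε (a 1) (a 2) * E.ε (a 2) (a 1)) * (E.ε (a 1) (a 3) * E.ε (a 3) (a 1)))) * E.mul_symm (a 2) (a 3)
  have hLHS : (2 : k)⁻¹ * ∑ σ : Equiv.Perm (Fin 4),
      pMult E.ε σ a * Bv (v (σ 0)) (ρ (μ (v (σ 1)) (v (σ 2))) (v (σ 3)))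
      = (-4 : k) * Bv (ρ (μ (v 0) (v 1)) (v 2)) (v 3)
        + 4 * E.ε (a 1) (a 2) * Bv (ρ (μ (v 0) (v 2)) (v 1)) (v 3)
        - 4 * (E.ε (a 1) (a 3) * E.ε (a 2) (a 3)) * Bv (ρ (μ (v 0) (v 3)) (v 1)) (v 2) := by
    rw [perm_sum (fun σ : Equiv.Perm (Fin 4) =>
      pMult E.ε σ a * Bv (v (σ 0)) (ρ (μ (v (σ 1)) (v (σ 2))) (v (σ 3))))]
    rw [H0, H1, H2, H3, H4, H5, H6, H7, H8, H9, H10, H11, H12, H13, H14, H15, H16, H17, H18, H19, H20, H21, H22, H23]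
    rw [inv_mul_eq_div, div_eq_iff h2']
    ring
  have G0 : pMult E.ε c0123 a * Bg (μ (v (c0123 0)) (v (c0123 1))) (μ (v (c0123 2)) (v (c0123 3)))
      = Bv (ρ (μ (v 0) (v 1)) (v 2)) (v 3) := by
    simp only [c0123_a0, c0123_a1, c0123_a2, c0123_a3, pM_c0123]
    rw [hBgS 0 1 2 3]
    try ring
  have G1 : pMult E.ε c0213 a * Bg (μ (v (c0213 0)) (v (c0213 1))) (μ (v (c0213 2)) (v (c0213 3)))
      = -(E.ε (a 1) (a 2)) * Bv (ρ (μ (v 0) (v 2)) (v 1)) (v 3) := by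
    simp only [c0213_a0, c0213_a1, c0213_a2, c0213_a3, pM_c0213]
    rw [hBgS 0 2 1 3]
    try ring
  have G2 : pMult E.ε c0312 a * Bg (μ (v (c0312 0)) (v (c0312 1))) (μ (v (c0312 2)) (v (c0312 3)))
      = (E.ε (a 1) (a 3) * E.ε (a 2) (a 3)) * Bv (ρ (μ (v 0) (v 3)) (v 1)) (v 2) := by
    simp only [c0312_a0, c0312_a1, c0312_a2, c0312_a3, pM_c0312]
    rw [hBgS 0 3 1 2]
    try ring
  have G3 : pMult E.ε c1203 a * Bg (μ (v (c1203 0)) (v (c1203 1))) (μ (v (c1203 2)) (v (c1203 3)))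
      = (E.ε (a 1) (a 3) * E.ε (a 2) (a 3)) * Bv (ρ (μ (v 0) (v 3)) (v 1)) (v 2) := by
    simp only [c1203_a0, c1203_a1, c1203_a2, c1203_a3, pM_c1203]
    rw [hBgS 1 2 0 3, hE 1 2 0 3]
    linear_combination ((Bv (ρ (μ (v 0) (v 3)) (v 1)) (v 2) * E.ε (a 1) (a 3) * E.ε (a 2) (a 3))) * E.mul_symm (a 0) (a 1)
      + ((Bv (ρ (μ (v 0) (v 3)) (v 1)) (v 2) * E.ε (a 1) (a 3) * E.ε (a 2) (a 3) * (E.ε (a 0) (a 1) * E.ε (a 1) (a 0)))) * E.mul_symm (a 0) (a 2)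
  have G4 : pMult E.ε c1302 a * Bg (μ (v (c1302 0)) (v (c1302 1))) (μ (v (c1302 2)) (v (c1302 3)))
      = -(E.ε (a 1) (a 2)) * Bv (ρ (μ (v 0) (v 2)) (v 1)) (v 3) := by
    simp only [c1302_a0, c1302_a1, c1302_a2, c1302_a3, pM_c1302]
    rw [hBgS 1 3 0 2, hE 1 3 0 2]
    linear_combination ((-1) * (Bv (ρ (μ (v 0) (v 2)) (v 1)) (v 3) * E.ε (a 1) (a 2))) * E.mul_symm (a 0) (a 1)
      + ((-1) * (Bv (ρ (μ (v 0) (v 2)) (v 1)) (v 3) * E.ε (a 1) (a 2) * (E.ε (a 0) (a 1) * E.ε (a 1) (a 0)))) * E.mul_symm (a 0) (a 3)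
      + ((-1) * (Bv (ρ (μ (v 0) (v 2)) (v 1)) (v 3) * E.ε (a 1) (a 2) * (E.ε (a 0) (a 1) * E.ε (a 1) (a 0)) * (E.ε (a 0) (a 3) * E.ε (a 3) (a 0)))) * E.mul_symm (a 2) (a 3)
  have G5 : pMult E.ε c2301 a * Bg (μ (v (c2301 0)) (v (c2301 1))) (μ (v (c2301 2)) (v (c2301 3)))
      = Bv (ρ (μ (v 0) (v 1)) (v 2)) (v 3) := by
    simp only [c2301_a0, c2301_a1, c2301_a2, c2301_a3, pM_c2301]
    rw [hBgS 2 3 0 1, hE 2 3 0 1]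
    linear_combination ((Bv (ρ (μ (v 0) (v 1)) (v 2)) (v 3))) * E.mul_symm (a 0) (a 2)
      + ((Bv (ρ (μ (v 0) (v 1)) (v 2)) (v 3) * (E.ε (a 0) (a 2) * E.ε (a 2) (a 0)))) * E.mul_symm (a 0) (a 3)
      + ((Bv (ρ (μ (v 0) (v 1)) (v 2)) (v 3) * (E.ε (a 0) (a 2) * E.ε (a 2) (a 0)) * (E.ε (a 0) (a 3) * E.ε (a 3) (a 0)))) * E.mul_symm (a 1) (a 2)
      + ((Bv (ρ (μ (v 0) (v 1)) (v 2)) (v 3) * (E.ε (a 0) (a 2) * E.ε (a 2) (a 0)) * (E.ε (a 0) (a 3) * E.ε (a 3) (a 0)) * (E.ε (a 1) (a 2) * E.ε (a 2) (a 1)))) * E.mul_symm (a 1) (a 3)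
  have K2 : E.ε (a 0) (a 1) * E.ε (a 0) (a 2) * Bv (ρ (μ (v 1) (v 2)) (v 0)) (v 3)
      = (E.ε (a 1) (a 3) * E.ε (a 2) (a 3)) * Bv (ρ (μ (v 0) (v 3)) (v 1)) (v 2) := by
    rw [hE 1 2 0 3]
    linear_combination ((Bv (ρ (μ (v 0) (v 3)) (v 1)) (v 2) * E.ε (a 1) (a 3) * E.ε (a 2) (a 3))) * E.mul_symm (a 0) (a 1)
      + ((Bv (ρ (μ (v 0) (v 3)) (v 1)) (v 2) * E.ε (a 1) (a 3) * E.ε (a 2) (a 3) * (E.ε (a 0) (a 1) * E.ε (a 1) (a 0)))) * E.mul_symm (a 0) (a 2)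
  have K3 : E.ε (a 0) (a 2) * E.ε (a 1) (a 2) * Bv (ρ (μ (v 2) (v 0)) (v 1)) (v 3)
      = -(E.ε (a 1) (a 2)) * Bv (ρ (μ (v 0) (v 2)) (v 1)) (v 3) := by
    rw [hA 2 0 1 3]
    linear_combination ((-1) * (Bv (ρ (μ (v 0) (v 2)) (v 1)) (v 3) * E.ε (a 1) (a 2))) * E.mul_symm (a 0) (a 2)
  refine ⟨?_, ?_⟩
  · rw [hLHS, show Finset.univ.filter (fun σ : Equiv.Perm (Fin 4) => σ 0 < σ 1 ∧ σ 2 < σ 3)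
        = [c0123, c0213, c0312, c1203, c1302, c2301].toFinset from by decide,
      List.sum_toFinset _ (by decide)]
    simp only [List.map_cons, List.map_nil, List.sum_cons, List.sum_nil, add_zero]
    rw [G0, G1, G2, G3, G4, G5]
    ring
  · rw [hLHS]
    simp only [E.add_snd, E.add_fst]
    rw [K2, K3]
    ring
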